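/- Suppose there are K = 2^T experts and a randomized environment that at round 1 sets all losses to −1, then at each round t picks (uniformly at random) half of the experts whose loss has been −1 so far and sets their loss to 1 permanently. Then: (a) every expert's loss sequence has total variation at most 2; (b) for any (possibly randomized) learner, the expected loss at each round is at least 0, while there exists an expert with cumulative loss −T; hence the expected regret of any learner is at least T. -/
import Mathlib

open Finset

noncomputable def BVe (T : ℕ) : (Fin T → Bool) ≃ Fin (2 ^ T) :=
  (Equiv.arrowCongr (Equiv.refl (Fin T)) finTwoEquiv.symm).trans finFunctionFinEquiv

noncomputable def BVloss (T : ℕ) (ω : Fin T → Bool) (t : ℕ) (i : Fin (2 ^ T)) : ℝ :=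
  if ∀ s : Fin T, (s : ℕ) < t → (BVe T).symm i s = ω s then -1 else 1

lemma BVloss_cases (T : ℕ) (ω : Fin T → Bool) (t : ℕ) (i : Fin (2 ^ T)) :
    BVloss T ω t i = 1 ∨ BVloss T ω t i = -1 := by
  unfold BVloss; split_ifs <;> simp

lemma BVloss_match (T : ℕ) {ω : Fin T → Bool} {t : ℕ} {i : Fin (2 ^ T)}
    (h : BVloss T ω t i = -1) :
    ∀ s : Fin T, (s : ℕ) < t → (BVe T).symm i s = ω s := by
  by_contra hc
  unfold BVloss at h
  rw [if_neg hc] at h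
  norm_num at h

lemma BVloss_mono (T : ℕ) (ω : Fin T → Bool) (t : ℕ) (i : Fin (2 ^ T)) :
    BVloss T ω t i ≤ BVloss T ω (t + 1) i := by
  unfold BVloss
  by_cases h2 : ∀ s : Fin T, (s : ℕ) < t + 1 → (BVe T).symm i s = ω s
  · rw [if_pos h2, if_pos (fun s hs => h2 s (Nat.lt_succ_of_lt hs))]
  · rw [if_neg h2]
    split_ifs <;> norm_num

lemma BVloss_congr (T : ℕ) {ω ω' : Fin T → Bool} {t : ℕ}
    (h : ∀ s : Fin T, (s : ℕ) < t → ω s = ω' s) (i : Fin (2 ^ T)) :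
    BVloss T ω t i = BVloss T ω' t i := by
  unfold BVloss
  refine if_congr ⟨fun H s hs => ?_, fun H s hs => ?_⟩ rfl rfl
  · rw [H s hs, h s hs]
  · rw [H s hs, h s hs]

lemma BVloss_min (T : ℕ) (ω : Fin T → Bool) (t : ℕ) :
    BVloss T ω t (BVe T ω) = -1 := by
  unfold BVloss
  rw [if_pos]
  intro s _
  rw [Equiv.symm_apply_apply]

lemma BV_telescope (f : ℕ → ℝ) (n : ℕ) :
    ∑ t ∈ Finset.Icc 1 n, (f (t + 1) - f t) = f (n + 1) - f 1 := by
  induction n with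
  | zero => simp
  | succ n ih =>
    rw [Finset.sum_Icc_succ_top (by omega), ih]; ring

/-- Lower bound for experts with bounded variation: with `K = 2^T` experts
there is a randomized environment (a finite probability space `Ω` with weights
`p` and losses `ℓ ω t i` for rounds `t = 1,…,T`) such that:
(a) losses are in `{-1,1}` and every expert's loss sequence has total
variation at most 2;
(b) for every (adaptively chosen, possibly randomized) learner strategy `I`
— measurable with respect to the past losses — the expected loss at every
round is at least 0, while in every realization some expert has cumulative
loss `-T`; hence the expected regret of any learner is at least `T`. -/
theorem bounded_variation_lower_bound (T : ℕ) (hT : 1 ≤ T) :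
    ∃ (Ω : Type) (_ : Fintype Ω) (p : Ω → ℝ) (ℓ : Ω → ℕ → Fin (2 ^ T) → ℝ),
      (∀ ω, 0 ≤ p ω) ∧ (∑ ω, p ω = 1) ∧
      (∀ ω, ∀ t ∈ Finset.Icc 1 T, ∀ i, ℓ ω t i = 1 ∨ ℓ ω t i = -1) ∧
      (∀ ω i, ∑ t ∈ Finset.Icc 1 (T - 1), |ℓ ω (t + 1) i - ℓ ω t i| ≤ 2) ∧
      (∀ ω, ∃ i, ∑ t ∈ Finset.Icc 1 T, ℓ ω t i = -(T : ℝ)) ∧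
      (∀ I : Ω → ℕ → Fin (2 ^ T),
        (∀ ω ω' t, (∀ s, s < t → ℓ ω s = ℓ ω' s) → I ω t = I ω' t) →
        (∀ t ∈ Finset.Icc 1 T, 0 ≤ ∑ ω, p ω * ℓ ω t (I ω t)) ∧
        (T : ℝ) ≤ ∑ ω, p ω *
          ((∑ t ∈ Finset.Icc 1 T, ℓ ω t (I ω t)) -
            ⨅ i : Fin (2 ^ T), ∑ t ∈ Finset.Icc 1 T, ℓ ω t i)) := by
  classical
  refine ⟨Fin T → Bool, inferInstance, fun _ => ((2 : ℝ) ^ T)⁻¹, BVloss T,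
    fun ω => by positivity, ?_, fun ω t _ i => BVloss_cases T ω t i, ?_, ?_, ?_⟩
  · rw [Finset.sum_const, Finset.card_univ]
    simp [Fintype.card_fun]
  · -- variation ≤ 2
    intro ω i
    calc ∑ t ∈ Finset.Icc 1 (T - 1), |BVloss T ω (t + 1) i - BVloss T ω t i|
        = ∑ t ∈ Finset.Icc 1 (T - 1), (BVloss T ω (t + 1) i - BVloss T ω t i) :=
          Finset.sum_congr rfl fun t _ =>
            abs_of_nonneg (by linarith [BVloss_mono T ω t i])
      _ = BVloss T ω (T - 1 + 1) i - BVloss T ω 1 i :=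
          BV_telescope (fun t => BVloss T ω t i) (T - 1)
      _ ≤ 2 := by
          rcases BVloss_cases T ω (T - 1 + 1) i with h1 | h1 <;>
          rcases BVloss_cases T ω 1 i with h2 | h2 <;> rw [h1, h2] <;> norm_num
  · -- expert with cumulative loss -T
    intro ω
    refine ⟨BVe T ω, ?_⟩
    rw [Finset.sum_congr rfl fun t _ => BVloss_min T ω t, Finset.sum_const, Nat.card_Icc]
    simp
  · -- learner part
    intro I hI
    have key : ∀ t ∈ Finset.Icc 1 T, 0 ≤ ∑ ω, ((2 : ℝ) ^ T)⁻¹ * BVloss T ω t (I ω t) := by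
      intro t ht
      rw [Finset.mem_Icc] at ht
      obtain ⟨j, hjval⟩ : ∃ j : Fin T, (j : ℕ) = t - 1 := ⟨⟨t - 1, by omega⟩, rfl⟩
      set σ : (Fin T → Bool) → (Fin T → Bool) :=
        fun ω => Function.update ω j (!(ω j)) with hσ
      have hσj : ∀ ω, σ ω j = !(ω j) := fun ω => Function.update_self _ _ _
      have hσne : ∀ ω (s : Fin T), s ≠ j → σ ω s = ω s := fun ω s hs => by
        simp [hσ, Function.update_apply, hs]
      have hinv : Function.Involutive σ := by
        intro ω
        funext s
        by_cases hs : s = j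
        · subst hs
          rw [hσj, hσj, Bool.not_not]
        · rw [hσne _ _ hs, hσne _ _ hs]
      have hIσ : ∀ ω, I (σ ω) t = I ω t := by
        intro ω
        apply hI
        intro s hs
        funext i
        apply BVloss_congr
        intro s' hs'
        exact hσne ω s' (Fin.ne_of_val_ne (by omega))
      have hpair : ∀ ω, 0 ≤ BVloss T ω t (I ω t) + BVloss T (σ ω) t (I (σ ω) t) := by
        intro ω
        rw [hIσ ω]
        have hnotboth : ¬ (BVloss T ω t (I ω t) = -1 ∧ BVloss T (σ ω) t (I ω t) = -1) := by
          rintro ⟨ha, hb⟩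
          have hA := BVloss_match T ha j (by omega)
          have hB := BVloss_match T hb j (by omega)
          rw [hA] at hB
          rw [hσj] at hB
          simp at hB
        rcases BVloss_cases T ω t (I ω t) with h1 | h1 <;>
          rcases BVloss_cases T (σ ω) t (I ω t) with h2 | h2 <;>
          rw [h1, h2] <;> norm_num
        exact hnotboth ⟨h1, h2⟩
      have hsum : ∑ ω, BVloss T (σ ω) t (I (σ ω) t) = ∑ ω, BVloss T ω t (I ω t) :=
        Fintype.sum_bijective σ hinv.bijective _ _ (fun ω => rfl)
      have h2 : 0 ≤ ∑ ω, (BVloss T ω t (I ω t) + BVloss T (σ ω) t (I (σ ω) t)) :=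
        Finset.sum_nonneg fun ω _ => hpair ω
      rw [Finset.sum_add_distrib, hsum] at h2
      rw [← Finset.mul_sum]
      have h3 : 0 ≤ ∑ ω, BVloss T ω t (I ω t) := by linarith
      positivity
    refine ⟨key, ?_⟩
    have hinf : ∀ ω : Fin T → Bool,
        (⨅ i : Fin (2 ^ T), ∑ t ∈ Finset.Icc 1 T, BVloss T ω t i) = -(T : ℝ) := by
      intro ω
      have hle : ∀ i, -(T : ℝ) ≤ ∑ t ∈ Finset.Icc 1 T, BVloss T ω t i := by
        intro i
        calc -(T : ℝ) = ∑ _t ∈ Finset.Icc 1 T, (-1 : ℝ) := by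
              rw [Finset.sum_const, Nat.card_Icc]; simp
          _ ≤ _ := Finset.sum_le_sum fun t _ => by
              rcases BVloss_cases T ω t i with h | h <;> rw [h] <;> norm_num
      have hwit : ∑ t ∈ Finset.Icc 1 T, BVloss T ω t (BVe T ω) = -(T : ℝ) := by
        rw [Finset.sum_congr rfl fun t _ => BVloss_min T ω t, Finset.sum_const, Nat.card_Icc]
        simp
      refine le_antisymm ?_ (le_ciInf hle)
      calc (⨅ i : Fin (2 ^ T), ∑ t ∈ Finset.Icc 1 T, BVloss T ω t i)
          ≤ ∑ t ∈ Finset.Icc 1 T, BVloss T ω t (BVe T ω) :=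
            ciInf_le (Finite.bddBelow_range _) _
        _ = -(T : ℝ) := hwit
    have hswap : ∑ ω, ((2 : ℝ) ^ T)⁻¹ * ∑ t ∈ Finset.Icc 1 T, BVloss T ω t (I ω t)
        = ∑ t ∈ Finset.Icc 1 T, ∑ ω, ((2 : ℝ) ^ T)⁻¹ * BVloss T ω t (I ω t) := by
      rw [Finset.sum_comm]
      exact Finset.sum_congr rfl fun ω _ => Finset.mul_sum _ _ _
    have hp1 : ∑ ω : Fin T → Bool, ((2 : ℝ) ^ T)⁻¹ = 1 := by
      rw [Finset.sum_const, Finset.card_univ]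
      simp [Fintype.card_fun]
    calc (T : ℝ)
        = 0 + (T : ℝ) * 1 := by ring
      _ ≤ (∑ t ∈ Finset.Icc 1 T, ∑ ω, ((2 : ℝ) ^ T)⁻¹ * BVloss T ω t (I ω t))
            + (T : ℝ) * ∑ ω : Fin T → Bool, ((2 : ℝ) ^ T)⁻¹ := by
          rw [hp1]
          exact add_le_add (Finset.sum_nonneg key) le_rfl
      _ = ∑ ω, ((2 : ℝ) ^ T)⁻¹ *
            ((∑ t ∈ Finset.Icc 1 T, BVloss T ω t (I ω t)) -
              ⨅ i : Fin (2 ^ T), ∑ t ∈ Finset.Icc 1 T, BVloss T ω t i) := by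
          rw [← hswap, Finset.mul_sum, ← Finset.sum_add_distrib]
          exact Finset.sum_congr rfl fun ω _ => by rw [hinf ω]; ring
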